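/- Let α > 0 and let B be a real random variable with E(|B|^α) = 1 and P(B ≠ 0) = 1. Let R̃ be a real random variable independent of nonnegative constants K₊, K₋ such that t^α P(R̃ > t) → K₊ and t^α P(R̃ < −t) → K₋ as t → ∞. Suppose R = A + B R̃ where (A, B) is a bounded random pair independent of R̃ (|A| ≤ a, |B| ≤ m₀ a.s.). Then t^α P(R > t) → E(|B|^α (1_{B>0} K₊ + 1_{B<0} K₋)) as t → ∞. -/

import Mathlib

open MeasureTheory Filter ProbabilityTheory Topology

/-! By independence, `P(A + B R' > t) = E[φ_t(A, B)]` with `φ_t(a, b) = P(a + b R' > t)`.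
For fixed `(a, b)` the substitution `t ↦ (t - a) / |b|` turns the tail hypotheses into
`t ^ α φ_t(a, b) → |b| ^ α K±`. Since `|A| ≤ a` and `|B| ≤ m₀`, for large `t` we have
`t ^ α φ_t(A, B) ≤ (2 m₀) ^ α M` almost surely, where `M` bounds `s ^ α P(|R'| > s)` for
large `s`; so dominated convergence applies. -/

lemma tendsto_rpow_mul_comp_affine {α K : ℝ} {g : ℝ → ℝ}
    (hg : Tendsto (fun u => u ^ α * g u) atTop (𝓝 K)) (a : ℝ) {c : ℝ} (hc : 0 < c) :
    Tendsto (fun t => t ^ α * g ((t - a) / c)) atTop (𝓝 (c ^ α * K)) := by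
  have hs : Tendsto (fun t : ℝ => (t - a) / c) atTop atTop :=
    (tendsto_atTop_add_const_right _ (-a) tendsto_id).atTop_div_const hc
  have hratio : Tendsto (fun t : ℝ => t / ((t - a) / c)) atTop (𝓝 c) := by
    have h : Tendsto (fun t : ℝ => c * (1 + a / (t - a))) atTop (𝓝 (c * (1 + 0))) :=
      tendsto_const_nhds.mul (tendsto_const_nhds.add (tendsto_const_nhds.div_atTop
        (tendsto_atTop_add_const_right _ (-a) tendsto_id)))
    rw [add_zero, mul_one] at h
    refine h.congr' ?_
    filter_upwards [eventually_gt_atTop a] with t ht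
    have : t - a ≠ 0 := (sub_pos.2 ht).ne'
    field_simp
    ring
  refine ((hratio.rpow_const (Or.inl hc.ne')).mul (hg.comp hs)).congr' ?_
  filter_upwards [hs.eventually_gt_atTop 0, eventually_ge_atTop 0] with t hst ht
  rw [Function.comp_apply, ← mul_assoc, ← Real.mul_rpow (div_nonneg ht hst.le) hst.le,
    div_mul_cancel₀ _ hst.ne']

section Tails

variable {ν : Measure ℝ} {α : ℝ}

lemma tendsto_rpow_mul_measureReal_affine_gt {Kp Km : ℝ}
    (hp : Tendsto (fun t => t ^ α * ν.real {r | r > t}) atTop (𝓝 Kp))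
    (hm : Tendsto (fun t => t ^ α * ν.real {r | r < -t}) atTop (𝓝 Km)) (a b : ℝ) :
    Tendsto (fun t => t ^ α * ν.real {r | a + b * r > t}) atTop
      (𝓝 (|b| ^ α * ((if 0 < b then Kp else 0) + (if b < 0 then Km else 0)))) := by
  rcases lt_trichotomy b 0 with hb | rfl | hb
  · have key := tendsto_rpow_mul_comp_affine hm a (neg_pos.2 hb)
    simp only [abs_of_neg hb, if_neg hb.not_gt, if_pos hb, zero_add]
    refine key.congr fun t => ?_
    congr 3
    ext r
    simp only [div_neg, neg_neg, lt_div_iff_of_neg hb]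
    constructor <;> intro h <;> linarith
  · simp only [lt_irrefl, if_false, add_zero, mul_zero]
    refine tendsto_const_nhds.congr' ?_
    filter_upwards [eventually_ge_atTop a] with t ht
    simp [not_lt.2 ht]
  · have key := tendsto_rpow_mul_comp_affine hp a hb
    simp only [abs_of_pos hb, if_pos hb, if_neg hb.not_gt, add_zero]
    refine key.congr fun t => ?_
    congr 3
    ext r
    simp only [gt_iff_lt, div_lt_iff₀ hb]
    constructor <;> intro h <;> linarith

lemma eventually_rpow_mul_measureReal_abs_gt_le {Kp Km : ℝ}
    (hp : Tendsto (fun t => t ^ α * ν.real {r | r > t}) atTop (𝓝 Kp))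
    (hm : Tendsto (fun t => t ^ α * ν.real {r | r < -t}) atTop (𝓝 Km)) :
    ∀ᶠ s in atTop, s ^ α * ν.real {r | s < |r|} ≤ Kp + Km + 1 := by
  filter_upwards [(hp.add hm).eventually (eventually_le_nhds (lt_add_one (Kp + Km))),
    eventually_ge_atTop 0] with s hs hs0
  have hsplit : {r : ℝ | s < |r|} = {r | r > s} ∪ {r | r < -s} := by
    ext r
    simp only [Set.mem_ofPred_eq, Set.mem_union, lt_abs, gt_iff_lt, lt_neg]
  calc s ^ α * ν.real {r | s < |r|}
      ≤ s ^ α * (ν.real {r | r > s} + ν.real {r | r < -s}) := by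
        rw [hsplit]
        gcongr
        exact measureReal_union_le _ _
    _ ≤ Kp + Km + 1 := by rw [mul_add]; exact hs

lemma eventually_rpow_mul_measureReal_affine_gt_le [IsFiniteMeasure ν] (hα : 0 ≤ α) {M : ℝ}
    (hτ : ∀ᶠ s in atTop, s ^ α * ν.real {r | s < |r|} ≤ M) (a m : ℝ) :
    ∀ᶠ t in atTop, ∀ a₀ b, |a₀| ≤ a → |b| ≤ m →
      t ^ α * ν.real {r | a₀ + b * r > t} ≤ (2 * m) ^ α * M := by
  obtain ⟨s₀, hs₀⟩ := eventually_atTop.1 hτ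
  have hM : 0 ≤ M := (hs₀ _ (le_max_left s₀ 0)).trans' (by positivity)
  filter_upwards [eventually_gt_atTop a, eventually_ge_atTop (2 * a),
    eventually_ge_atTop (a + m * max s₀ 0)] with t hta ht2a hts₀ a₀ b ha₀ hb
  have hm : 0 ≤ m := (abs_nonneg b).trans hb
  rcases eq_or_ne b 0 with rfl | hb0
  · have hempty : {r : ℝ | a₀ + 0 * r > t} = ∅ := by
      ext r
      simp only [zero_mul, add_zero, Set.mem_ofPred_eq, Set.mem_empty_iff_false, iff_false,
        not_lt]
      linarith [le_abs_self a₀]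
    rw [hempty, measureReal_empty, mul_zero]
    positivity
  have hbpos : 0 < |b| := abs_pos.2 hb0
  set s := (t - a) / |b| with hs_def
  have hbs : |b| * s = t - a := mul_div_cancel₀ _ hbpos.ne'
  have hs0 : 0 ≤ s := div_nonneg (sub_pos.2 hta).le hbpos.le
  have hs : s₀ ≤ s := by
    rw [hs_def, le_div_iff₀ hbpos]
    nlinarith [le_max_left s₀ 0, le_max_right s₀ 0]
  have hts : t ≤ 2 * m * s := by nlinarith [mul_le_mul_of_nonneg_right hb hs0]
  have hsub : {r : ℝ | a₀ + b * r > t} ⊆ {r | s < |r|} := by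
    intro r hr
    simp only [Set.mem_ofPred_eq, gt_iff_lt] at hr ⊢
    nlinarith [le_abs_self a₀, le_abs_self (b * r), abs_mul b r]
  calc t ^ α * ν.real {r | a₀ + b * r > t}
      ≤ (2 * m * s) ^ α * ν.real {r | s < |r|} := by
        gcongr
        · linarith [abs_nonneg a₀]
        · exact measure_ne_top ν _
    _ = (2 * m) ^ α * (s ^ α * ν.real {r | s < |r|}) := by
        rw [Real.mul_rpow (by positivity) hs0, mul_assoc]
    _ ≤ (2 * m) ^ α * M := by
        gcongr
        exact hs₀ s hs

end Tails

lemma ProbabilityTheory.IndepFun.measure_mem_eq_lintegral {Ω β γ : Type*} [MeasurableSpace Ω]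
    [MeasurableSpace β] [MeasurableSpace γ] {μ : Measure Ω} [IsFiniteMeasure μ]
    {X : Ω → β} {Y : Ω → γ}
    (hX : Measurable X) (hY : Measurable Y) (hXY : IndepFun X Y μ) {S : Set (β × γ)}
    (hS : MeasurableSet S) :
    μ {ω | (X ω, Y ω) ∈ S} = ∫⁻ ω, μ.map Y {y | (X ω, y) ∈ S} ∂μ := by
  have hmap := (indepFun_iff_map_prod_eq_prod_map_map hX.aemeasurable hY.aemeasurable).1 hXY
  calc μ {ω | (X ω, Y ω) ∈ S} = μ.map (fun ω => (X ω, Y ω)) S :=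
        (Measure.map_apply (hX.prodMk hY) hS).symm
    _ = ∫⁻ x, μ.map Y (Prod.mk x ⁻¹' S) ∂μ.map X := by rw [hmap, Measure.prod_apply hS]
    _ = ∫⁻ ω, μ.map Y {y | (X ω, y) ∈ S} ∂μ :=
        lintegral_map (measurable_measure_prodMk_left hS) hX

lemma measurableSet_affine_gt (t : ℝ) :
    MeasurableSet {p : (ℝ × ℝ) × ℝ | p.1.1 + p.1.2 * p.2 > t} :=
  measurableSet_lt measurable_const (by fun_prop)

lemma measurable_measure_affine_gt {Ω : Type*} [MeasurableSpace Ω] (ν : Measure ℝ) [SFinite ν]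
    {A B : Ω → ℝ} (hA : Measurable A) (hB : Measurable B) (t : ℝ) :
    Measurable fun ω => ν {r | A ω + B ω * r > t} :=
  (measurable_measure_prodMk_left (measurableSet_affine_gt t)).comp (hA.prodMk hB)

lemma measureReal_affine_gt_eq_integral {Ω : Type*} [MeasurableSpace Ω] {μ : Measure Ω}
    [IsFiniteMeasure μ] {A B R : Ω → ℝ} (hA : Measurable A) (hB : Measurable B)
    (hR : Measurable R) (hindep : IndepFun (fun ω => (A ω, B ω)) R μ) (t : ℝ) :
    μ.real {ω | A ω + B ω * R ω > t} =
      ∫ ω, (μ.map R).real {r | A ω + B ω * r > t} ∂μ := by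
  have h : μ {ω | A ω + B ω * R ω > t} = ∫⁻ ω, μ.map R {r | A ω + B ω * r > t} ∂μ :=
    hindep.measure_mem_eq_lintegral (hA.prodMk hB) hR (measurableSet_affine_gt t)
  rw [measureReal_def, h, ← integral_toReal]
  · rfl
  · exact (measurable_measure_affine_gt _ hA hB t).aemeasurable
  · exact ae_of_all _ fun _ => measure_lt_top _ _

theorem stmt_18_general {Ω : Type*} [MeasurableSpace Ω] (μ : Measure Ω) [IsProbabilityMeasure μ]
    (A B R' : Ω → ℝ) (hA : Measurable A) (hB : Measurable B) (hR' : Measurable R')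
    (hindep : IndepFun (fun ω => (A ω, B ω)) R' μ)
    (α : ℝ) (hα : 0 < α)
    (a m₀ : ℝ) (hAbd : ∀ᵐ ω ∂μ, |A ω| ≤ a) (hBbd : ∀ᵐ ω ∂μ, |B ω| ≤ m₀)
    (Kp Km : ℝ)
    (htailp : Tendsto (fun t : ℝ => t ^ α * (μ {ω | R' ω > t}).toReal) atTop (nhds Kp))
    (htailm : Tendsto (fun t : ℝ => t ^ α * (μ {ω | R' ω < -t}).toReal) atTop (nhds Km)) :
    Tendsto (fun t : ℝ => t ^ α * (μ {ω | A ω + B ω * R' ω > t}).toReal) atTop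
      (nhds (∫ ω, |B ω| ^ α *
        ((if 0 < B ω then Kp else 0) + (if B ω < 0 then Km else 0)) ∂μ)) := by
  set ν := μ.map R'
  have hp : Tendsto (fun t => t ^ α * ν.real {r | r > t}) atTop (𝓝 Kp) :=
    htailp.congr fun t =>
      congrArg (t ^ α * ·) (map_measureReal_apply hR' measurableSet_Ioi).symm
  have hm : Tendsto (fun t => t ^ α * ν.real {r | r < -t}) atTop (𝓝 Km) :=
    htailm.congr fun t =>
      congrArg (t ^ α * ·) (map_measureReal_apply hR' measurableSet_Iio).symm
  have hbound := eventually_rpow_mul_measureReal_affine_gt_le hα.le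
    (eventually_rpow_mul_measureReal_abs_gt_le hp hm) a m₀
  refine (tendsto_integral_filter_of_dominated_convergence
    (fun _ => (2 * m₀) ^ α * (Kp + Km + 1)) ?_ ?_ (integrable_const _)
    (ae_of_all _ fun ω => tendsto_rpow_mul_measureReal_affine_gt hp hm (A ω) (B ω))).congr
    fun t => ?_
  · exact .of_forall fun t =>
      ((measurable_measure_affine_gt ν hA hB t).ennreal_toReal.const_mul _).aestronglyMeasurable
  · filter_upwards [hbound, eventually_ge_atTop 0] with t ht ht0
    filter_upwards [hAbd, hBbd] with ω hAω hBω
    rw [Real.norm_of_nonneg (by positivity)]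
    exact ht _ _ hAω hBω
  · rw [integral_const_mul, ← measureReal_affine_gt_eq_integral hA hB hR' hindep]
    rfl

theorem stmt_18 {Ω : Type*} [MeasurableSpace Ω] (μ : Measure Ω) [IsProbabilityMeasure μ]
    (A B R' : Ω → ℝ) (hA : Measurable A) (hB : Measurable B) (hR' : Measurable R')
    (hindep : IndepFun (fun ω => (A ω, B ω)) R' μ)
    (α : ℝ) (hα : 0 < α)
    (hBmom : ∫ ω, |B ω| ^ α ∂μ = 1)
    (hBne : ∀ᵐ ω ∂μ, B ω ≠ 0)
    (a m₀ : ℝ) (hAbd : ∀ᵐ ω ∂μ, |A ω| ≤ a) (hBbd : ∀ᵐ ω ∂μ, |B ω| ≤ m₀)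
    (Kp Km : ℝ) (hKp : 0 ≤ Kp) (hKm : 0 ≤ Km)
    (htailp : Tendsto (fun t : ℝ => t ^ α * (μ {ω | R' ω > t}).toReal) atTop (nhds Kp))
    (htailm : Tendsto (fun t : ℝ => t ^ α * (μ {ω | R' ω < -t}).toReal) atTop (nhds Km)) :
    Tendsto (fun t : ℝ => t ^ α * (μ {ω | A ω + B ω * R' ω > t}).toReal) atTop
      (nhds (∫ ω, |B ω| ^ α *
        ((if 0 < B ω then Kp else 0) + (if B ω < 0 then Km else 0)) ∂μ)) :=
  stmt_18_general μ A B R' hA hB hR' hindep α hα a m₀ hAbd hBbd Kp Km htailp htailm
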